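/- arXiv:math/0603204 — 4 statements merged into one kernel-verified Lean document; each statement's English description precedes it below -/
import Mathlib

section
/- Let G be a group with elements S_{ij}, S_{rj}, S_{sj}, S_{rs} such that (a) S_{sj}S_{rs}S_{rj} = S_{rs}S_{rj}S_{sj} = S_{rj}S_{sj}S_{rs}, and (b) S_{ij} commutes with S_{sj}S_{rs}S_{sj}⁻¹. Then Artin's fifth relation holds: S_{ij}·(S_{rs}S_{rj}S_{sj}S_{rj}⁻¹S_{sj}⁻¹) = (S_{rs}S_{rj}S_{sj}S_{rj}⁻¹S_{sj}⁻¹)·S_{ij}, i.e. S_{rs}⁻¹S_{ij}S_{rs} = (S_{rj}S_{sj}S_{rj}⁻¹S_{sj}⁻¹)S_{ij}(S_{rj}S_{sj}S_{rj}⁻¹S_{sj}⁻¹)⁻¹ after conjugation rearrangement. -/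
/-- From the modified Artin relation (3) and the commutation of S_{ij}
with S_{sj}S_{rs}S_{sj}⁻¹, derive Artin's fifth relation (as a commutation). -/
theorem stmt_3 {G : Type*} [Group G] (Sij Srj Ssj Srs : G)
    (ha1 : Ssj * Srs * Srj = Srs * Srj * Ssj)
    (ha2 : Srs * Srj * Ssj = Srj * Ssj * Srs)
    (hb : Sij * (Ssj * Srs * Ssj⁻¹) = (Ssj * Srs * Ssj⁻¹) * Sij) :
    Sij * (Srs * Srj * Ssj * Srj⁻¹ * Ssj⁻¹) =
      (Srs * Srj * Ssj * Srj⁻¹ * Ssj⁻¹) * Sij := by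
  have key : Srs * Srj * Ssj * Srj⁻¹ * Ssj⁻¹ = Ssj * Srs * Ssj⁻¹ := by
    rw [show Srs * Srj * Ssj * Srj⁻¹ * Ssj⁻¹ = (Srs * Srj * Ssj) * (Srj⁻¹ * Ssj⁻¹) by group,
      ← ha1]; group
  rw [key]; exact hb
end

section
/- Let G be a group with elements T_{r,j}, T_{i,j}, T_{s,j}, T_{r,s}, T_{ris,j} satisfying: (a) T_{ris,j} = T_{r,j}·T_{i,j}·T_{s,j} (factorization), (b) T_{ris,j} commutes with T_{r,s} (nested twists commute), and (c) T_{s,j}·T_{r,s}·T_{s,j}⁻¹ = T_{r,j}⁻¹·T_{r,s}·T_{r,j}. Then T_{i,j} commutes with T_{s,j}·T_{r,s}·T_{s,j}⁻¹. -/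
/-- Derivation of the second modified Artin relation from the convex
twist relations: (a) factorization, (b) nested twists commute, (c) relation (3').
Conclusion: T_{i,j} commutes with T_{s,j}·T_{r,s}·T_{s,j}⁻¹. -/
theorem stmt_6 {G : Type*} [Group G] (Trj Tij Tsj Trs Trisj : G)
    (ha : Trisj = Trj * Tij * Tsj)
    (hb : Trisj * Trs = Trs * Trisj)
    (hc : Tsj * Trs * Tsj⁻¹ = Trj⁻¹ * Trs * Trj) :
    Tij * (Tsj * Trs * Tsj⁻¹) = (Tsj * Trs * Tsj⁻¹) * Tij := by
  subst ha
  -- from hb: Tij * Tsj * Trs * Tsj⁻¹ = Trj⁻¹ * Trs * Trj * Tij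
  have h1 : Tij * (Tsj * Trs * Tsj⁻¹) = Trj⁻¹ * Trs * (Trj * Tij) := by
    have := congrArg (fun x => Trj⁻¹ * x * Tsj⁻¹) hb
    simpa [mul_assoc] using this
  rw [h1, hc]
  group
end

section
/- Let G be a group with elements R_{iB}, R_{iC}, R_{iBC} for index data as below, satisfying the factorization R_{iBC} = R_{iB}·R_{iC} whenever ({i}, B, C) is admissible, and with R_{ij} denoting the two-element rotations. Then every R_{iBC} with |B|,|C| ≥ 1 lies in the subgroup generated by the elements R_{ij}: i.e., in the rotation presentation, the generators R_{ij} suffice to generate the group. -/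
/-- The position of `x` in the cyclic reading order of `Fin n` starting at `s`. -/
def cyclicPos {n : ℕ} (s x : Fin n) : ℕ := ((x - s : Fin n) : ℕ)

/-- A triple of pairwise disjoint subsets of the cyclically ordered set Fin n is
admissible if, reading clockwise from some starting point, all elements of the
first set come before all elements of the second, which come before all elements
of the third. -/
def AdmissibleTriple {n : ℕ} (B₁ B₂ B₃ : Finset (Fin n)) : Prop :=
  Disjoint B₁ B₂ ∧ Disjoint B₁ B₃ ∧ Disjoint B₂ B₃ ∧
  ∃ s : Fin n,
    (∀ x ∈ B₁, ∀ y ∈ B₂, cyclicPos s x < cyclicPos s y) ∧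
    (∀ y ∈ B₂, ∀ z ∈ B₃, cyclicPos s y < cyclicPos s z) ∧
    (∀ x ∈ B₁, ∀ z ∈ B₃, cyclicPos s x < cyclicPos s z)

/-!
Every `B` with at least three elements splits as `{i} ∪ {j} ∪ C` with `({i}, {j}, C)`
admissible: take any `i ∈ B` and let `j` be the first element of `B` after `i` in the cyclic
order. The factorization relation then gives `R B = R {i, j} * R ({i} ∪ C)`, and `{i} ∪ C` is
smaller than `B`, so induction on `|B|` reduces everything to the two-element rotations.
-/

section

variable {n : ℕ} [NeZero n]

lemma cyclicPos_injective (s : Fin n) : Function.Injective (cyclicPos s) :=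
  fun _ _ h => sub_left_injective (Fin.val_injective h)

lemma cyclicPos_self (s : Fin n) : cyclicPos s s = 0 := by
  simp [cyclicPos]

lemma cyclicPos_pos_of_ne {s x : Fin n} (h : x ≠ s) : 0 < cyclicPos s x :=
  Nat.pos_of_ne_zero fun h0 => h (cyclicPos_injective s (h0.trans (cyclicPos_self s).symm))

end

variable {n : ℕ}

lemma admissibleTriple_singleton_of_cyclicPos_lt [NeZero n] {i : Fin n}
    {B C : Finset (Fin n)} (hiB : i ∉ B) (hiC : i ∉ C) (hBC : Disjoint B C)
    (hlt : ∀ y ∈ B, ∀ z ∈ C, cyclicPos i y < cyclicPos i z) :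
    AdmissibleTriple {i} B C := by
  refine ⟨Finset.disjoint_singleton_left.2 hiB, Finset.disjoint_singleton_left.2 hiC, hBC,
    i, ?_, hlt, ?_⟩
  · rintro x hx y hy
    rw [Finset.mem_singleton.1 hx, cyclicPos_self]
    exact cyclicPos_pos_of_ne (ne_of_mem_of_not_mem hy hiB)
  · rintro x hx z hz
    rw [Finset.mem_singleton.1 hx, cyclicPos_self]
    exact cyclicPos_pos_of_ne (ne_of_mem_of_not_mem hz hiC)

lemma exists_admissibleTriple_singleton_singleton {B : Finset (Fin n)} (hB : 3 ≤ B.card) :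
    ∃ i j C, AdmissibleTriple {i} {j} C ∧ C.Nonempty ∧ insert j (insert i C) = B := by
  obtain ⟨i, hi⟩ := Finset.card_pos.1 (by omega : 0 < B.card)
  have : NeZero n := ⟨(Fin.pos i).ne'⟩
  obtain ⟨j, hjS, hjmin⟩ := (B.erase i).exists_min_image (cyclicPos i)
    (Finset.card_pos.1 (by rw [Finset.card_erase_of_mem hi]; omega))
  set C := (B.erase i).erase j with hC
  have hCne : C.Nonempty := Finset.card_pos.1 <| by
    rw [hC, Finset.card_erase_of_mem hjS, Finset.card_erase_of_mem hi]; omega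
  have hji : j ≠ i := Finset.ne_of_mem_erase hjS
  refine ⟨i, j, C, admissibleTriple_singleton_of_cyclicPos_lt ?_ ?_ ?_ ?_, hCne, ?_⟩
  · simpa using hji.symm
  · simp [hC]
  · simp [hC]
  · rintro y hy z hz
    rw [Finset.mem_singleton.1 hy]
    exact (hjmin z (Finset.mem_of_mem_erase hz)).lt_of_ne
      fun h => Finset.ne_of_mem_erase hz (cyclicPos_injective i h).symm
  · rw [Finset.insert_comm, Finset.insert_erase hjS, Finset.insert_erase hi]

lemma rotation_mem_of_factorization {G : Type*} [Group G] (R : Finset (Fin n) → G)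
    (hfact : ∀ (i : Fin n) (B C : Finset (Fin n)), B.Nonempty → C.Nonempty →
      AdmissibleTriple {i} B C → R ({i} ∪ B ∪ C) = R ({i} ∪ B) * R ({i} ∪ C))
    (H : Subgroup G) (hpair : ∀ i j : Fin n, i ≠ j → R {i, j} ∈ H) :
    ∀ B : Finset (Fin n), 2 ≤ B.card → R B ∈ H := by
  intro B hB
  induction B using Finset.strongInduction with
  | H B ih =>
  obtain h2 | h3 := hB.eq_or_lt
  · obtain ⟨i, j, hij, rfl⟩ := Finset.card_eq_two.1 h2.symm
    exact hpair i j hij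
  obtain ⟨i, j, C, hadm, hCne, rfl⟩ := exists_admissibleTriple_singleton_singleton h3
  have hj : j ∉ insert i C := by
    simpa [Finset.disjoint_singleton_left, Finset.disjoint_singleton_right, eq_comm]
      using And.intro hadm.1 hadm.2.2.1
  have hsplit := hfact i {j} C (Finset.singleton_nonempty j) hCne hadm
  rw [Finset.union_assoc, Finset.singleton_union, Finset.singleton_union,
    Finset.singleton_union, Finset.insert_comm, Finset.pair_comm] at hsplit
  rw [hsplit]
  refine mul_mem (hpair j i ?_) (ih _ (Finset.ssubset_insert hj) ?_)
  · rintro rfl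
    exact hj (Finset.mem_insert_self _ _)
  · rw [Finset.card_insert_of_notMem hj] at h3
    rw [Finset.singleton_union]; omega

/-- in the rotation presentation, the factorization relations
R_{iBC} = R_{iB}·R_{iC} for admissible ({i}, B, C) imply that every rotation R_B
with |B| ≥ 2 lies in the subgroup generated by the two-element rotations R_{ij}. -/
theorem stmt_13 {n : ℕ} {G : Type*} [Group G] (R : Finset (Fin n) → G)
    (hfact : ∀ (i : Fin n) (B C : Finset (Fin n)), B.Nonempty → C.Nonempty →
      AdmissibleTriple {i} B C →
      R ({i} ∪ B ∪ C) = R ({i} ∪ B) * R ({i} ∪ C)) :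
    ∀ B : Finset (Fin n), 2 ≤ B.card →
      R B ∈ Subgroup.closure {g : G | ∃ i j : Fin n, i ≠ j ∧ g = R {i, j}} :=
  rotation_mem_of_factorization R hfact _ fun i j hij => Subgroup.subset_closure ⟨i, j, hij, rfl⟩
end

section
/- Let G be a group with elements S_{BC}, S_B, S_C, T_{B,C} satisfying S_{BC} = S_B·S_C·T_{B,C} with all factors pairwise commuting, and suppose S_B = 1 whenever |B| = 1. Then for any finite nonempty B, the swing S_B lies in the subgroup of G generated by the twists {T_{B',C'} : B', C' nonempty, B'∪C' ⊆ B, B'∩C' = ∅}, by induction on |B|. -/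
/-- Swings as Twists: given S_{B∪C} = S_B·S_C·T_{B,C} with pairwise
commuting factors for every disjoint nonempty pair, and S_B = 1 for singletons,
every swing S_B lies in the subgroup generated by the twists with blocks inside B. -/
theorem stmt_14 {α : Type*} [DecidableEq α] {G : Type*} [Group G]
    (S : Finset α → G) (T : Finset α → Finset α → G)
    (hST : ∀ B C : Finset α, B.Nonempty → C.Nonempty → Disjoint B C →
      S (B ∪ C) = S B * S C * T B C ∧
      S B * S C = S C * S B ∧
      S B * T B C = T B C * S B ∧
      S C * T B C = T B C * S C)
    (h1 : ∀ B : Finset α, B.card = 1 → S B = 1) :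
    ∀ B : Finset α, B.Nonempty →
      S B ∈ Subgroup.closure {g : G | ∃ B' C' : Finset α,
        B'.Nonempty ∧ C'.Nonempty ∧ B' ∪ C' ⊆ B ∧ Disjoint B' C' ∧ g = T B' C'} := by
  intro B
  induction B using Finset.strongInductionOn with
  | _ B ih =>
    intro hB
    rcases eq_or_lt_of_le (Finset.one_le_card.mpr hB) with h1c | h2c
    · rw [h1 B h1c.symm]; exact one_mem _
    · obtain ⟨a, ha⟩ := hB
      set C := B.erase a with hC
      have hCne : C.Nonempty := by
        rw [← Finset.card_pos, Finset.card_erase_of_mem ha]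
        omega
      have hdisj : Disjoint ({a} : Finset α) C := by
        simp [hC, Finset.disjoint_singleton_left]
      have hun : ({a} : Finset α) ∪ C = B := by
        rw [hC, ← Finset.insert_eq, Finset.insert_erase ha]
      obtain ⟨heq, -, -, -⟩ := hST {a} C (Finset.singleton_nonempty a) hCne hdisj
      rw [hun, h1 {a} (Finset.card_singleton a), one_mul] at heq
      rw [heq]
      have hsub : C ⊂ B := Finset.erase_ssubset ha
      have hmem := ih C hsub hCne
      refine mul_mem ?_ (Subgroup.subset_closure ⟨{a}, C,
        Finset.singleton_nonempty a, hCne, le_of_eq hun, hdisj, rfl⟩)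
      refine Subgroup.closure_mono ?_ hmem
      rintro g ⟨B', C', hB', hC', hsub', hd', rfl⟩
      exact ⟨B', C', hB', hC', hsub'.trans hsub.subset, hd', rfl⟩
end
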